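/- arXiv:1110.0639 — 4 statements merged into one kernel-verified Lean document; each statement's English description precedes it below -/
import Mathlib

section
/- Define, for n×n real symmetric positive definite matrices g and h (with n ≥ 1), the distortion K²(g,h) = ((1/n)·tr(g⁻¹h))^n / det(g⁻¹h). Then for any three symmetric positive definite matrices g, h, k one has K²(g,k) ≤ nⁿ · K²(g,h) · K²(h,k). -/
/-!
The determinants factor exactly, since `g⁻¹ * k = (g⁻¹ * h) * (h⁻¹ * k)`, so the inequality
reduces to `tr (g⁻¹ k) ≤ tr (g⁻¹ h) * tr (h⁻¹ k)`. Conjugating by `√h` turns this into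
`tr (P Q) ≤ tr P * tr Q` for the positive semidefinite matrices `P = √h g⁻¹ √h` and
`Q = √h⁻¹ k √h⁻¹`. Diagonalising `P = U D Uᴴ` gives `tr (P Q) = ∑ λᵢ (Uᴴ Q U)ᵢᵢ`, and every
diagonal entry of the positive semidefinite matrix `Uᴴ Q U` is at most its trace `tr Q`.
-/

open Matrix

noncomputable def K2 {n : ℕ} (g h : Matrix (Fin n) (Fin n) ℝ) : ℝ :=
  ((1 / (n : ℝ)) * (g⁻¹ * h).trace) ^ n / (g⁻¹ * h).det

namespace Matrix

variable {m : Type*} [Fintype m]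

theorem PosSemidef.diag_le_trace {R : Type*} [Ring R] [PartialOrder R] [StarRing R]
    [IsOrderedAddMonoid R] {A : Matrix m m R} (hA : A.PosSemidef) (i : m) :
    A i i ≤ A.trace :=
  Finset.single_le_sum (fun j _ ↦ hA.diag_nonneg (i := j)) (Finset.mem_univ i)

variable [DecidableEq m]

theorem IsHermitian.trace_mul_eq_sum_eigenvalues_mul {P : Matrix m m ℝ} (hP : P.IsHermitian)
    (Q : Matrix m m ℝ) :
    (P * Q).trace = ∑ i, hP.eigenvalues i *
      ((hP.eigenvectorUnitary : Matrix m m ℝ)ᴴ * Q * hP.eigenvectorUnitary) i i := by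
  conv_lhs => rw [hP.spectral_theorem, Unitary.conjStarAlgAut_apply]
  rw [Matrix.mul_assoc, trace_mul_cycle, trace_mul_comm]
  simp [trace, diagonal_mul, star_eq_conjTranspose]

theorem PosSemidef.trace_mul_nonneg {P Q : Matrix m m ℝ} (hP : P.PosSemidef)
    (hQ : Q.PosSemidef) : 0 ≤ (P * Q).trace := by
  rw [hP.1.trace_mul_eq_sum_eigenvalues_mul]
  exact Finset.sum_nonneg fun i _ ↦
    mul_nonneg (hP.eigenvalues_nonneg i) (hQ.conjTranspose_mul_mul_same _).diag_nonneg

theorem PosSemidef.trace_mul_le_trace_mul_trace {P Q : Matrix m m ℝ} (hP : P.PosSemidef)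
    (hQ : Q.PosSemidef) : (P * Q).trace ≤ P.trace * Q.trace := by
  set U : Matrix m m ℝ := ↑hP.1.eigenvectorUnitary
  have hM : (Uᴴ * Q * U).PosSemidef := hQ.conjTranspose_mul_mul_same U
  have htr : (Uᴴ * Q * U).trace = Q.trace := by
    rw [trace_mul_cycle, ← star_eq_conjTranspose,
      mem_unitaryGroup_iff.mp hP.1.eigenvectorUnitary.2, Matrix.one_mul]
  rw [hP.1.trace_mul_eq_sum_eigenvalues_mul, hP.1.trace_eq_sum_eigenvalues, Finset.sum_mul]
  exact Finset.sum_le_sum fun i _ ↦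
    mul_le_mul_of_nonneg_left (htr ▸ hM.diag_le_trace i) (hP.eigenvalues_nonneg i)

open scoped MatrixOrder in
theorem PosSemidef.trace_mul_le_trace_mul_mul_trace_inv_mul {A B h : Matrix m m ℝ}
    (hA : A.PosSemidef) (hB : B.PosSemidef) (hh : h.PosDef) :
    (A * B).trace ≤ (A * h).trace * (h⁻¹ * B).trace := by
  set S := CFC.sqrt h
  have hS : S.PosSemidef := (CFC.sqrt_nonneg h).posSemidef
  have hSS : S * S = h := CFC.sqrt_mul_sqrt_self h hh.posSemidef.nonneg
  have hSu : IsUnit S.det := (isUnit_iff_isUnit_det S).mp ((CFC.isUnit_sqrt_iff h).mpr hh.isUnit)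
  have hP : (S * A * S).PosSemidef := by
    simpa only [hS.1.eq] using hA.mul_mul_conjTranspose_same S
  have hQ : (S⁻¹ * B * S⁻¹).PosSemidef := by
    simpa only [hS.inv.1.eq] using hB.mul_mul_conjTranspose_same S⁻¹
  calc (A * B).trace = (S * A * S * (S⁻¹ * B * S⁻¹)).trace := by
        rw [show S * A * S * (S⁻¹ * B * S⁻¹) = S * (A * B) * S⁻¹ by
          simp only [Matrix.mul_assoc, mul_nonsing_inv_cancel_left _ _ hSu],
          trace_mul_cycle, nonsing_inv_mul _ hSu, Matrix.one_mul]
    _ ≤ (S * A * S).trace * (S⁻¹ * B * S⁻¹).trace := hP.trace_mul_le_trace_mul_trace hQ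
    _ = (A * h).trace * (h⁻¹ * B).trace := by
        rw [trace_mul_cycle, hSS, trace_mul_comm, trace_mul_cycle, ← mul_inv_rev, hSS]

theorem det_inv_mul_mul_det_inv_mul {R : Type*} [CommRing R] (g : Matrix m m R)
    {h : Matrix m m R} (k : Matrix m m R) (hh : IsUnit h.det) :
    (g⁻¹ * h).det * (h⁻¹ * k).det = (g⁻¹ * k).det := by
  rw [← det_mul, Matrix.mul_assoc, mul_nonsing_inv_cancel_left _ _ hh]

theorem PosDef.det_inv_mul_pos {g h : Matrix m m ℝ} (hg : g.PosDef) (hh : h.PosDef) :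
    0 < (g⁻¹ * h).det := by
  rw [det_mul]
  exact mul_pos hg.inv.det_pos hh.det_pos

end Matrix

theorem natCast_pow_mul_one_div_pow (n : ℕ) : (n : ℝ) ^ n * (1 / n) ^ n = 1 := by
  rcases eq_or_ne n 0 with rfl | hn
  · simp
  · rw [← mul_pow, mul_one_div_cancel (Nat.cast_ne_zero.mpr hn), one_pow]

theorem stmt_2_general (n : ℕ) (g h k : Matrix (Fin n) (Fin n) ℝ)
    (hg : g.PosDef) (hh : h.PosDef) (hk : k.PosDef) :
    K2 g k ≤ (n : ℝ) ^ n * K2 g h * K2 h k := by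
  have htr_nonneg := hg.inv.posSemidef.trace_mul_nonneg hk.posSemidef
  have htr := hg.inv.posSemidef.trace_mul_le_trace_mul_mul_trace_inv_mul hk.posSemidef hh
  have hdet_gh := hg.det_inv_mul_pos hh
  have hdet_hk := hh.det_inv_mul_pos hk
  calc K2 g k = (1 / n * (g⁻¹ * k).trace) ^ n / ((g⁻¹ * h).det * (h⁻¹ * k).det) := by
        rw [K2, det_inv_mul_mul_det_inv_mul _ _ hh.det_pos.ne'.isUnit]
    _ ≤ (1 / n * ((g⁻¹ * h).trace * (h⁻¹ * k).trace)) ^ n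
          / ((g⁻¹ * h).det * (h⁻¹ * k).det) := by gcongr
    _ = (n : ℝ) ^ n * K2 g h * K2 h k := by
        rw [K2, K2]
        linear_combination -(1 / n * (g⁻¹ * h).trace) ^ n * (h⁻¹ * k).trace ^ n
          / ((g⁻¹ * h).det * (h⁻¹ * k).det) * natCast_pow_mul_one_div_pow n

theorem stmt_2 (n : ℕ) (hn : 1 ≤ n) (g h k : Matrix (Fin n) (Fin n) ℝ)
    (hg : g.PosDef) (hh : h.PosDef) (hk : k.PosDef) :
    K2 g k ≤ (n : ℝ) ^ n * K2 g h * K2 h k :=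
  stmt_2_general n g h k hg hh hk
end

section
/- For n×n real symmetric positive definite matrices g and h (n ≥ 1), with K²(g,h) = ((1/n)·tr(g⁻¹h))^n / det(g⁻¹h), one has K²(g,h) ≤ K²(h,g)^{n-1}. -/
/-!
Write `g = Bᴴ * B`. Then `g⁻¹ * h = B⁻¹ * (B⁻ᴴ * h * B⁻¹) * B` is similar to a positive definite
matrix, hence to `diagonal μ` with all `μᵢ > 0`, and `h⁻¹ * g = (g⁻¹ * h)⁻¹` to `diagonal μ⁻¹`.
With `A`, `G`, `H` the arithmetic, geometric and harmonic means of the `μᵢ`, `K²(g, h) = (A / G)ⁿ`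
and `K²(h, g) = (G / H)ⁿ`, so the claim follows from `A * H ^ (n - 1) ≤ Gⁿ`. For `νᵢ = μᵢ⁻¹` this
is Maclaurin's inequality `e_{n-1}(ν) / n ≤ (e_1(ν) / n) ^ (n - 1)`, i.e. the adjugate bound
`tr (Adj D) ≤ n ^ (2 - n) * (tr D) ^ (n - 1)` for `D = diagonal ν`; it follows by induction on `n`
from AM-GM and the tangent line bound for `x ↦ x ^ k`.
-/

open Matrix

open Finset

section Maclaurin

variable {ι : Type*}

theorem prod_erase_eq_div₀ {M : Type*} [CommGroupWithZero M] [DecidableEq ι] (s : Finset ι)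
    {f : ι → M} {i : ι} (hi : i ∈ s) (hfi : f i ≠ 0) :
    ∏ j ∈ s.erase i, f j = (∏ j ∈ s, f j) / f i := by
  rw [eq_div_iff hfi, prod_erase_mul s f hi]

theorem prod_le_mean_pow_card (s : Finset ι) {f : ι → ℝ} (hf : ∀ i ∈ s, 0 ≤ f i) :
    ∏ i ∈ s, f i ≤ ((∑ i ∈ s, f i) / #s) ^ #s := by
  rcases s.eq_empty_or_nonempty with rfl | hs
  · simp
  have hcard : (#s : ℝ) ≠ 0 := by exact_mod_cast hs.card_pos.ne'
  have amgm := Real.geom_mean_le_arith_mean_weighted s (fun _ ↦ (#s : ℝ)⁻¹) f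
    (fun _ _ ↦ by positivity) (by simp [hcard]) hf
  rw [Real.finsetProd_rpow s f hf, ← Finset.mul_sum, inv_mul_eq_div] at amgm
  calc ∏ i ∈ s, f i = ((∏ i ∈ s, f i) ^ (#s : ℝ)⁻¹) ^ #s :=
        (Real.rpow_inv_natCast_pow (prod_nonneg hf) hs.card_pos.ne').symm
    _ ≤ _ := by gcongr; exact Real.rpow_nonneg (prod_nonneg hf) _

theorem pow_add_mul_sub_le_pow (k : ℕ) {a b : ℝ} (ha : 0 < a) (hb : 0 ≤ b) :
    a ^ (k + 1) + (k + 1) * a ^ k * (b - a) ≤ b ^ (k + 1) := by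
  have bernoulli := one_add_mul_le_pow (a := (b - a) / a)
    (by rw [le_div_iff₀ ha]; linarith) (k + 1)
  rw [add_div' _ _ _ ha.ne', one_mul, add_sub_cancel, div_pow] at bernoulli
  calc a ^ (k + 1) + (k + 1) * a ^ k * (b - a)
      = a ^ (k + 1) * (1 + ((k + 1 : ℕ) : ℝ) * ((b - a) / a)) := by
        field_simp; push_cast; ring
    _ ≤ a ^ (k + 1) * (b ^ (k + 1) / a ^ (k + 1)) := by gcongr
    _ = b ^ (k + 1) := by field_simp

theorem sum_prod_erase_le_card_mul_mean_pow [DecidableEq ι] (s : Finset ι) {f : ι → ℝ}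
    (hf : ∀ i ∈ s, 0 < f i) :
    ∑ i ∈ s, ∏ j ∈ s.erase i, f j ≤ #s * ((∑ i ∈ s, f i) / #s) ^ (#s - 1) := by
  induction s using Finset.induction_on with
  | empty => simp
  | @insert a t hat ih =>
    have hft : ∀ i ∈ t, 0 < f i := fun i hi ↦ hf i (mem_insert_of_mem hi)
    have hfa : 0 < f a := hf a (mem_insert_self a t)
    rcases t.eq_empty_or_nonempty with rfl | ht
    · simp
    have split : ∑ i ∈ insert a t, ∏ j ∈ (insert a t).erase i, f j
        = ∏ j ∈ t, f j + f a * ∑ i ∈ t, ∏ j ∈ t.erase i, f j := by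
      rw [sum_insert hat, erase_insert hat, mul_sum]
      congr 1
      refine sum_congr rfl fun i hi ↦ ?_
      rw [erase_insert_of_ne (ne_of_mem_of_not_mem hi hat).symm,
        prod_insert fun ha ↦ hat (mem_of_mem_erase ha)]
    obtain ⟨k, hk⟩ := Nat.exists_eq_add_one_of_ne_zero ht.card_pos.ne'
    have ih' := ih hft
    have amgm := prod_le_mean_pow_card t fun i hi ↦ (hft i hi).le
    rw [hk, Nat.add_sub_cancel] at ih'
    rw [hk] at amgm
    push_cast at ih' amgm
    set A := (∑ i ∈ t, f i) / (k + 1) with hA_def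
    have hA : 0 < A := div_pos (sum_pos hft ht) (by positivity)
    have hsum : ∑ i ∈ insert a t, f i = (k + 1) * A + f a := by
      rw [sum_insert hat, hA_def]; field_simp; ring
    rw [split, hsum, card_insert_of_notMem hat, hk, Nat.add_sub_cancel]
    push_cast
    set B := ((k + 1) * A + f a) / (k + 1 + 1) with hB_def
    calc ∏ j ∈ t, f j + f a * ∑ i ∈ t, ∏ j ∈ t.erase i, f j
        ≤ A ^ (k + 1) + f a * ((k + 1) * A ^ k) := by gcongr
      _ = (k + 1 + 1) * (A ^ (k + 1) + (k + 1) * A ^ k * (B - A)) := by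
        rw [hB_def]; field_simp; ring
      _ ≤ (k + 1 + 1) * B ^ (k + 1) := by
        gcongr
        exact pow_add_mul_sub_le_pow k hA (by positivity)

end Maclaurin

section Distortion

variable {ι : Type*} [Fintype ι]

noncomputable def distortion (μ : ι → ℝ) : ℝ :=
  ((1 / Fintype.card ι) * ∑ i, μ i) ^ Fintype.card ι / ∏ i, μ i

theorem distortion_le_distortion_inv_pow [Nonempty ι] {μ : ι → ℝ} (hμ : ∀ i, 0 < μ i) :
    distortion μ ≤ distortion μ⁻¹ ^ (Fintype.card ι - 1) := by
  classical
  obtain ⟨m, hm⟩ := Nat.exists_eq_add_one_of_ne_zero (Fintype.card_ne_zero (α := ι))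
  have hP : 0 < ∏ i, μ i := prod_pos fun i _ ↦ hμ i
  have hS : 0 ≤ ∑ i, μ i := sum_nonneg fun i _ ↦ (hμ i).le
  have maclaurin :=
    sum_prod_erase_le_card_mul_mean_pow univ (f := μ⁻¹) fun i _ ↦ inv_pos.mpr (hμ i)
  have herase (i : ι) : ∏ j ∈ univ.erase i, (μ j)⁻¹ = μ i / ∏ j, μ j := by
    rw [prod_erase_eq_div₀ univ (f := fun j ↦ (μ j)⁻¹) (mem_univ i) (inv_ne_zero (hμ i).ne'),
      prod_inv_distrib, inv_div_inv]
  simp only [Pi.inv_apply, herase, ← sum_div, card_univ, hm, Nat.add_sub_cancel] at maclaurin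
  simp only [distortion, hm, Nat.add_sub_cancel, Pi.inv_apply, prod_inv_distrib]
  push_cast at maclaurin ⊢
  have mean_le : 1 / (m + 1 : ℝ) * ∑ i, μ i ≤ ((∑ i, (μ i)⁻¹) / (m + 1)) ^ m * ∏ i, μ i := by
    rw [div_le_iff₀ hP] at maclaurin
    rw [one_div_mul_eq_div, div_le_iff₀ (by positivity)]
    linarith
  calc (1 / (m + 1 : ℝ) * ∑ i, μ i) ^ (m + 1) / ∏ i, μ i
      ≤ (((∑ i, (μ i)⁻¹) / (m + 1)) ^ m * ∏ i, μ i) ^ (m + 1) / ∏ i, μ i := by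
        gcongr
    _ = _ := by field_simp; ring

end Distortion

section Diagonalization

variable {n : Type*} [Fintype n] [DecidableEq n]

theorem Matrix.inv_conj_diagonal {K : Type*} [Field K] {P : Matrix n n K} (hP : IsUnit P)
    {μ : n → K} (hμ : ∀ i, μ i ≠ 0) :
    (P * diagonal μ * P⁻¹)⁻¹ = P * diagonal μ⁻¹ * P⁻¹ := by
  have hdet := (isUnit_iff_isUnit_det P).mp hP
  refine inv_eq_right_inv ?_
  calc P * diagonal μ * P⁻¹ * (P * diagonal μ⁻¹ * P⁻¹)
      = P * diagonal μ * (P⁻¹ * P) * diagonal μ⁻¹ * P⁻¹ := by simp only [Matrix.mul_assoc]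
    _ = 1 := by
      rw [nonsing_inv_mul P hdet, Matrix.mul_one, Matrix.mul_assoc P, diagonal_mul_diagonal]
      simp [hμ, mul_nonsing_inv P hdet]

theorem Matrix.PosDef.exists_eq_conj_diagonal {S : Matrix n n ℝ} (hS : S.PosDef) :
    ∃ U : Matrix n n ℝ, IsUnit U ∧ ∃ μ : n → ℝ, (∀ i, 0 < μ i) ∧ S = U * diagonal μ * U⁻¹ := by
  set U := hS.1.eigenvectorUnitary
  have hU : (U : Matrix n n ℝ)⁻¹ = star (U : Matrix n n ℝ) :=
    inv_eq_left_inv (Unitary.coe_star_mul_self U)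
  refine ⟨U, Unitary.isUnit_coe, hS.1.eigenvalues, hS.eigenvalues_pos, ?_⟩
  rw [hU]
  simpa using hS.1.spectral_theorem

open scoped MatrixOrder in
theorem Matrix.PosDef.exists_inv_mul_eq_conj_diagonal {g h : Matrix n n ℝ} (hg : g.PosDef)
    (hh : h.PosDef) :
    ∃ P : Matrix n n ℝ, IsUnit P ∧ ∃ μ : n → ℝ, (∀ i, 0 < μ i) ∧
      g⁻¹ * h = P * diagonal μ * P⁻¹ := by
  obtain ⟨B, hB, rfl⟩ :=
    CStarAlgebra.isStrictlyPositive_iff_eq_star_mul_self.mp hg.isStrictlyPositive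
  have hBdet := (isUnit_iff_isUnit_det B).mp hB
  have hBinv : IsUnit B⁻¹ := isUnit_nonsing_inv_iff.mpr hB
  obtain ⟨U, hU, μ, hμ, hSU⟩ :=
    (hh.conjTranspose_mul_mul_same (mulVec_injective_of_isUnit hBinv)).exists_eq_conj_diagonal
  refine ⟨B⁻¹ * U, hBinv.mul hU, μ, hμ, ?_⟩
  calc (star B * B)⁻¹ * h = B⁻¹ * (B⁻¹ᴴ * h * B⁻¹) * B := by
        rw [Matrix.mul_inv_rev, conjTranspose_nonsing_inv, star_eq_conjTranspose]
        simp only [Matrix.mul_assoc, nonsing_inv_mul B hBdet, Matrix.mul_one]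
    _ = B⁻¹ * U * diagonal μ * (B⁻¹ * U)⁻¹ := by
        rw [hSU, Matrix.mul_inv_rev, nonsing_inv_nonsing_inv B hBdet]
        simp only [Matrix.mul_assoc]

end Diagonalization

theorem K2_eq_distortion {n : ℕ} {g h P : Matrix (Fin n) (Fin n) ℝ} (hP : IsUnit P)
    {μ : Fin n → ℝ} (hgh : g⁻¹ * h = P * diagonal μ * P⁻¹) :
    K2 g h = distortion μ := by
  rw [K2, distortion, hgh, trace_conj hP, det_conj hP, trace_diagonal, det_diagonal,
    Fintype.card_fin]

theorem stmt_3 (n : ℕ) (hn : 1 ≤ n) (g h : Matrix (Fin n) (Fin n) ℝ)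
    (hg : g.PosDef) (hh : h.PosDef) :
    K2 g h ≤ K2 h g ^ (n - 1) := by
  have : Nonempty (Fin n) := ⟨⟨0, hn⟩⟩
  obtain ⟨P, hP, μ, hμ, hgh⟩ := hg.exists_inv_mul_eq_conj_diagonal hh
  have hhg : h⁻¹ * g = P * diagonal μ⁻¹ * P⁻¹ := by
    rw [← inv_conj_diagonal hP fun i ↦ (hμ i).ne', ← hgh, Matrix.mul_inv_rev,
      nonsing_inv_nonsing_inv g ((isUnit_iff_isUnit_det g).mp hg.isUnit)]
  rw [K2_eq_distortion hP hgh, K2_eq_distortion hP hhg]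
  simpa using distortion_le_distortion_inv_pow hμ
end

section
/- For an n×n real symmetric positive definite matrix A (n ≥ 1), the adjugate satisfies tr(Adj(A)) ≤ n^{2-n} · tr(A)^{n-1}. -/
/-!
Diagonalize `A` with eigenvalues `λ₁, …, λₙ > 0`. Then `tr A = ∑ λᵢ` and, because
`tr (adj (X * Y)) = tr (adj (Y * X))`, `tr (adj A) = ∑ᵢ ∏_{j ≠ i} λⱼ`. The claim becomes
Maclaurin's inequality `∑ᵢ ∏_{j ≠ i} λⱼ ≤ n (∑ λᵢ / n) ^ (n - 1)`, proved by induction on the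
number of terms: adding a term splits the sum as `∏_{old} + λ_new · (old sum)`, the first summand
is bounded by AM-GM, the second by induction, and the two bounds are merged by the tangent-line
inequality for `x ↦ x ^ (m + 1)`.
-/

open Matrix Finset

theorem pow_add_mul_pow_mul_sub_le_pow {K : Type*} [Field K] [LinearOrder K]
    [IsStrictOrderedRing K] {b c : K} (hb : 0 ≤ b) (hc : 0 ≤ c) (m : ℕ) :
    b ^ (m + 1) + (m + 1) * b ^ m * (c - b) ≤ c ^ (m + 1) := by
  rcases hb.eq_or_lt with rfl | hb
  · rcases m with _ | m <;> simp [pow_nonneg hc]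
  have bernoulli := one_add_mul_sub_le_pow (by linarith [div_nonneg hc hb.le] : -1 ≤ c / b) (m + 1)
  rw [div_pow, le_div_iff₀ (by positivity)] at bernoulli
  push_cast at bernoulli
  calc b ^ (m + 1) + (m + 1) * b ^ m * (c - b) = (1 + (m + 1) * (c / b - 1)) * b ^ (m + 1) := by
        rw [pow_succ]; field_simp
    _ ≤ c ^ (m + 1) := bernoulli

theorem Real.prod_le_sum_div_card_pow {ι : Type*} (s : Finset ι) {f : ι → ℝ}
    (hf : ∀ i ∈ s, 0 ≤ f i) :
    ∏ i ∈ s, f i ≤ ((∑ i ∈ s, f i) / #s) ^ #s := by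
  rcases s.eq_empty_or_nonempty with rfl | hs
  · simp
  have amgm := Real.geom_mean_le_arith_mean s (fun _ ↦ 1) f (fun _ _ ↦ zero_le_one)
    (by simpa using hs.card_pos) hf
  simp only [Real.rpow_one, sum_const, nsmul_eq_mul, mul_one, one_mul] at amgm
  calc ∏ i ∈ s, f i = ((∏ i ∈ s, f i) ^ (#s : ℝ)⁻¹) ^ #s :=
        (Real.rpow_inv_natCast_pow (prod_nonneg hf) hs.card_pos.ne').symm
    _ ≤ ((∑ i ∈ s, f i) / #s) ^ #s := by gcongr; exact Real.rpow_nonneg (prod_nonneg hf) _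

theorem Finset.sum_prod_erase_insert {ι M : Type*} [DecidableEq ι] [CommSemiring M]
    {s : Finset ι} {a : ι} (ha : a ∉ s) (f : ι → M) :
    ∑ i ∈ insert a s, ∏ j ∈ (insert a s).erase i, f j
      = ∏ j ∈ s, f j + f a * ∑ i ∈ s, ∏ j ∈ s.erase i, f j := by
  rw [sum_insert ha, erase_insert ha, mul_sum]
  congr 1
  refine sum_congr rfl fun i hi ↦ ?_
  rw [erase_insert_of_ne (ne_of_mem_of_not_mem hi ha).symm,
    prod_insert fun h ↦ ha (mem_of_mem_erase h)]

theorem Real.sum_prod_erase_le_card_mul_pow {ι : Type*} [DecidableEq ι] (s : Finset ι)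
    {f : ι → ℝ} (hf : ∀ i ∈ s, 0 ≤ f i) :
    ∑ i ∈ s, ∏ j ∈ s.erase i, f j ≤ #s * ((∑ i ∈ s, f i) / #s) ^ (#s - 1) := by
  induction s using Finset.induction_on with
  | empty => simp
  | @insert a s ha ih =>
    rw [sum_prod_erase_insert ha, sum_insert ha, card_insert_of_notMem ha]
    have hfa : 0 ≤ f a := hf a (mem_insert_self a s)
    have hfs : ∀ i ∈ s, 0 ≤ f i := fun i hi ↦ hf i (mem_insert_of_mem hi)
    rcases s.eq_empty_or_nonempty with rfl | hs
    · simp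
    obtain ⟨m, hm⟩ := Nat.exists_eq_add_one.mpr hs.card_pos
    set b := (∑ i ∈ s, f i) / #s
    set c := (f a + ∑ i ∈ s, f i) / (#s + 1 : ℕ)
    have hb : 0 ≤ b := div_nonneg (sum_nonneg hfs) (Nat.cast_nonneg _)
    have hc : 0 ≤ c := div_nonneg (add_nonneg hfa (sum_nonneg hfs)) (Nat.cast_nonneg _)
    have hfa_eq : f a = (m + 2) * c - (m + 1) * b := by
      simp only [b, c, hm]; push_cast; field_simp; ring
    have hprod : ∏ i ∈ s, f i ≤ b ^ (m + 1) := hm ▸ prod_le_sum_div_card_pow s hfs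
    have hsum : ∑ i ∈ s, ∏ j ∈ s.erase i, f j ≤ (m + 1) * b ^ m := by
      simpa [hm] using ih hfs
    have tangent := pow_add_mul_pow_mul_sub_le_pow hb hc m
    rw [hm]
    push_cast
    calc ∏ i ∈ s, f i + f a * ∑ i ∈ s, ∏ j ∈ s.erase i, f j
        ≤ b ^ (m + 1) + f a * ((m + 1) * b ^ m) := by gcongr
      _ ≤ (m + 1 + 1) * c ^ (m + 1) := by
        rw [hfa_eq]; linear_combination (m + 2 : ℝ) * tangent

namespace Matrix

theorem trace_adjugate_mul_comm {n R : Type*} [Fintype n] [DecidableEq n] [CommRing R]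
    (A B : Matrix n n R) : (A * B).adjugate.trace = (B * A).adjugate.trace := by
  rw [adjugate_mul_distrib, adjugate_mul_distrib, trace_mul_comm]

theorem trace_adjugate_diagonal {n R : Type*} [Fintype n] [DecidableEq n] [CommRing R]
    (d : n → R) : (diagonal d).adjugate.trace = ∑ i, ∏ j ∈ univ.erase i, d j := by
  rw [adjugate_diagonal, trace_diagonal]

theorem IsHermitian.trace_adjugate_eq {n 𝕜 : Type*} [Fintype n] [DecidableEq n] [RCLike 𝕜]
    {A : Matrix n n 𝕜} (hA : A.IsHermitian) :
    A.adjugate.trace = ∑ i, ∏ j ∈ univ.erase i, (hA.eigenvalues j : 𝕜) := by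
  conv_lhs => rw [hA.spectral_theorem, Unitary.conjStarAlgAut_apply, trace_adjugate_mul_comm,
    ← mul_assoc, Unitary.coe_star_mul_self, one_mul, trace_adjugate_diagonal]
  rfl

end Matrix

theorem natCast_mul_div_pow_eq_zpow_mul_pow (n : ℕ) (S : ℝ) :
    (n : ℝ) * (S / n) ^ (n - 1) = (n : ℝ) ^ ((2 : ℤ) - n) * S ^ (n - 1) := by
  rcases n with _ | m
  · simp
  have : (2 : ℤ) - (m + 1 : ℕ) = 1 - (m : ℕ) := by push_cast; ring
  rw [this, zpow_sub₀ (by positivity), zpow_one, zpow_natCast]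
  simp only [add_tsub_cancel_right, div_pow]
  ring

theorem stmt_4_general (n : ℕ) (A : Matrix (Fin n) (Fin n) ℝ)
    (hA : A.PosDef) :
    A.adjugate.trace ≤ (n : ℝ) ^ ((2 : ℤ) - (n : ℤ)) * A.trace ^ (n - 1) := by
  have hH : A.IsHermitian := hA.isHermitian
  have maclaurin := Real.sum_prod_erase_le_card_mul_pow univ
    fun i _ ↦ hA.posSemidef.eigenvalues_nonneg i
  rw [card_univ, Fintype.card_fin, natCast_mul_div_pow_eq_zpow_mul_pow] at maclaurin
  simpa [hH.trace_adjugate_eq, hH.trace_eq_sum_eigenvalues] using maclaurin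

theorem stmt_4 (n : ℕ) (hn : 1 ≤ n) (A : Matrix (Fin n) (Fin n) ℝ)
    (hA : A.PosDef) :
    A.adjugate.trace ≤ (n : ℝ) ^ ((2 : ℤ) - (n : ℤ)) * A.trace ^ (n - 1) :=
  stmt_4_general n A hA
end

section
/- For any n×n real invertible matrix B (n ≥ 2), the Hilbert–Schmidt (Frobenius) norm of the adjugate satisfies ‖Adj(B)‖_HS ≤ n^{-(n-2)/2} · ‖B‖_HS^{n-1}. -/
/-!
Put `A = B Bᵀ`, a positive semidefinite matrix with eigenvalues `λᵢ ≥ 0`. Since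
`adj(B)ᵀ adj(B) = adj(Bᵀ) adj(B) = adj(A)`, the squared norms are `‖adj B‖² = tr adj A = e_{n-1}(λ)`
and `‖B‖² = tr A = e_1(λ)`, so the bound is Maclaurin's inequality
`n^{n-2} e_{n-1}(λ) ≤ e_1(λ)^{n-1}`. That is proved by induction on `n`, adding one variable at a
time; both the base estimate `e_n ≤ (e_1 / n)^n` and the inductive step are instances of AM–GM.
-/

open Matrix Finset

theorem pow_card_mul_prod_le_sum_pow {ι : Type*} (t : Finset ι) (f : ι → ℝ)
    (hf : ∀ i ∈ t, 0 ≤ f i) : (#t : ℝ) ^ #t * ∏ i ∈ t, f i ≤ (∑ i ∈ t, f i) ^ #t := by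
  obtain ht | ht := (#t).eq_zero_or_pos
  · simp [card_eq_zero.mp ht]
  have amgm := Real.geom_mean_le_arith_mean_weighted t (fun _ ↦ (#t : ℝ)⁻¹) f
    (fun _ _ ↦ by positivity) (by simp [ht.ne']) hf
  rw [← mul_sum, Real.finsetProd_rpow t f hf] at amgm
  have := pow_le_pow_left₀ (Real.rpow_nonneg (prod_nonneg hf) _) amgm #t
  rwa [Real.rpow_inv_natCast_pow (prod_nonneg hf) ht.ne', mul_pow, inv_pow,
    le_inv_mul_iff₀ (by positivity)] at this

theorem add_two_mul_pow_mul_add_le (k : ℕ) {s y : ℝ} (hs : 0 ≤ s) (hy : 0 ≤ y) :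
    ((k + 2) * s) ^ k * (s + (k + 1) ^ 2 * y) ≤ (k + 1) ^ (k + 1) * (s + y) ^ (k + 1) := by
  -- AM–GM for `k` copies of `(k + 2) s` and one `s + (k + 1)² y`; their sum is `(k + 1)² (s + y)`.
  let f : Fin (k + 1) → ℝ := Fin.cons (s + (k + 1) ^ 2 * y) fun _ ↦ (k + 2) * s
  have amgm := pow_card_mul_prod_le_sum_pow univ f fun i _ ↦ by
    cases i using Fin.cases <;> simp only [f, Fin.cons_zero, Fin.cons_succ] <;> positivity
  have hsum : ∑ i, f i = (k + 1) ^ 2 * (s + y) := by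
    simp only [f, Fin.sum_cons, sum_const, card_univ, Fintype.card_fin, nsmul_eq_mul]
    ring
  simp only [card_univ, Fintype.card_fin, Nat.cast_add, Nat.cast_one, hsum, f, Fin.prod_cons,
    prod_const] at amgm
  rw [mul_comm (s + _), show ((k + 1) ^ 2 * (s + y)) ^ (k + 1)
      = ((k : ℝ) + 1) ^ (k + 1) * ((k + 1) ^ (k + 1) * (s + y) ^ (k + 1)) by
    rw [mul_pow, ← pow_mul, two_mul, pow_add, mul_assoc]] at amgm
  exact le_of_mul_le_mul_left amgm (by positivity)

theorem sum_prod_erase_cons {ι R : Type*} [DecidableEq ι] [CommSemiring R] {a : ι}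
    {t : Finset ι} (ha : a ∉ t) (f : ι → R) :
    ∑ i ∈ cons a t ha, ∏ j ∈ (cons a t ha).erase i, f j
      = ∏ j ∈ t, f j + f a * ∑ i ∈ t, ∏ j ∈ t.erase i, f j := by
  rw [sum_cons, erase_cons, mul_sum]
  congr 1
  refine sum_congr rfl fun i hi ↦ ?_
  rw [erase_cons_of_ne ha (ne_of_mem_of_not_mem hi ha).symm, prod_cons]

/-- Maclaurin's inequality `n ^ (n - 2) * e_{n-1} ≤ e_1 ^ (n - 1)`, multiplied by `n ^ 2` so that
no truncated subtraction occurs in the exponent of `n`. -/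
theorem pow_card_mul_sum_prod_erase_le {ι : Type*} [DecidableEq ι] (t : Finset ι) {f : ι → ℝ}
    (hf : ∀ i ∈ t, 0 ≤ f i) :
    (#t : ℝ) ^ #t * ∑ i ∈ t, ∏ j ∈ t.erase i, f j ≤ (#t : ℝ) ^ 2 * (∑ i ∈ t, f i) ^ (#t - 1) := by
  induction t using Finset.cons_induction with
  | empty => simp
  | cons a t ha ih =>
    obtain ⟨hfa, hf⟩ := (forall_mem_cons ha _).mp hf
    rw [sum_prod_erase_cons, card_cons, sum_cons, Nat.add_sub_cancel]
    rcases hk : #t with _ | k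
    · simp [card_eq_zero.mp hk]
    set s := ∑ i ∈ t, f i
    set P := ∏ j ∈ t, f j
    set E := ∑ i ∈ t, ∏ j ∈ t.erase i, f j
    have hP : ((k : ℝ) + 1) ^ (k + 1) * P ≤ s ^ (k + 1) := by
      simpa [hk] using pow_card_mul_prod_le_sum_pow t f hf
    have hE : ((k : ℝ) + 1) ^ (k + 1) * E ≤ (k + 1) ^ 2 * s ^ k := by
      simpa [hk] using ih hf
    refine le_of_mul_le_mul_left ?_ (by positivity : (0 : ℝ) < (k + 1) ^ (k + 1))
    push_cast
    calc ((k : ℝ) + 1) ^ (k + 1) * ((k + 1 + 1) ^ (k + 1 + 1) * (P + f a * E))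
        = (k + 2) ^ 2 * (k + 2) ^ k * ((k + 1) ^ (k + 1) * P + f a * ((k + 1) ^ (k + 1) * E)) := by
          ring
      _ ≤ (k + 2) ^ 2 * (k + 2) ^ k * (s ^ (k + 1) + f a * ((k + 1) ^ 2 * s ^ k)) := by
          gcongr
      _ = (k + 2) ^ 2 * (((k + 2) * s) ^ k * (s + (k + 1) ^ 2 * f a)) := by
          rw [mul_pow]
          ring
      _ ≤ (k + 2) ^ 2 * ((k + 1) ^ (k + 1) * (s + f a) ^ (k + 1)) := by
          gcongr ?_ * ?_
          exact add_two_mul_pow_mul_add_le k (sum_nonneg hf) hfa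
      _ = (k + 1) ^ (k + 1) * ((k + 1 + 1) ^ 2 * (f a + s) ^ (k + 1)) := by ring

theorem Matrix.IsHermitian.trace_adjugate {𝕜 n : Type*} [RCLike 𝕜] [Fintype n] [DecidableEq n]
    {A : Matrix n n 𝕜} (hA : A.IsHermitian) :
    A.adjugate.trace = ∑ i, ∏ j ∈ univ.erase i, (hA.eigenvalues j : 𝕜) := by
  have hUU : star (hA.eigenvectorUnitary : Matrix n n 𝕜) * hA.eigenvectorUnitary = 1 :=
    Unitary.coe_star_mul_self _
  conv_lhs => rw [hA.spectral_theorem, Unitary.conjStarAlgAut_apply]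
  rw [adjugate_mul_distrib, adjugate_mul_distrib, trace_mul_comm, Matrix.mul_assoc,
    ← adjugate_mul_distrib, hUU, adjugate_one, Matrix.mul_one, adjugate_diagonal, trace_diagonal]
  simp

theorem sqrt_le_rpow_mul_sqrt_pow_of_pow_mul_le {n : ℕ} (hn : 0 < n) {e S : ℝ} (hS : 0 ≤ S)
    (h : (n : ℝ) ^ n * e ≤ n ^ 2 * S ^ (n - 1)) :
    √e ≤ (n : ℝ) ^ (-(((n : ℝ) - 2) / 2)) * √S ^ (n - 1) := by
  have hn' : (0 : ℝ) < n := by exact_mod_cast hn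
  have hsq : ((n : ℝ) ^ (-(((n : ℝ) - 2) / 2)) * √S ^ (n - 1)) ^ 2
      = n ^ 2 / n ^ n * S ^ (n - 1) := by
    rw [mul_pow, ← pow_mul, mul_comm (n - 1), pow_mul, Real.sq_sqrt hS, ← Real.rpow_natCast _ 2,
      ← Real.rpow_mul hn'.le, show -(((n : ℝ) - 2) / 2) * (2 : ℕ) = 2 - n by push_cast; ring,
      Real.rpow_sub hn', Real.rpow_two, Real.rpow_natCast]
  rw [Real.sqrt_le_iff, hsq, div_mul_eq_mul_div, le_div_iff₀ (by positivity), mul_comm e]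
  exact ⟨by positivity, h⟩

theorem stmt_5_general (n : ℕ) (hn : 2 ≤ n) (B : Matrix (Fin n) (Fin n) ℝ) :
    Real.sqrt ((B.adjugate.transpose * B.adjugate).trace) ≤
      (n : ℝ) ^ (-(((n : ℝ) - 2) / 2)) * Real.sqrt ((B.transpose * B).trace) ^ (n - 1) := by
  have hA : (B * Bᵀ).PosSemidef := by
    simpa using posSemidef_self_mul_conjTranspose B
  have hadj : (B.adjugateᵀ * B.adjugate).trace = ∑ i, ∏ j ∈ univ.erase i, hA.1.eigenvalues j := by
    rw [adjugate_transpose, ← adjugate_mul_distrib, hA.1.trace_adjugate]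
    rfl
  have htr : (Bᵀ * B).trace = ∑ i, hA.1.eigenvalues i := by
    rw [trace_mul_comm, hA.1.trace_eq_sum_eigenvalues]
    rfl
  have maclaurin := pow_card_mul_sum_prod_erase_le univ fun i _ ↦ hA.eigenvalues_nonneg i
  rw [card_univ, Fintype.card_fin] at maclaurin
  rw [hadj, htr]
  exact sqrt_le_rpow_mul_sqrt_pow_of_pow_mul_le (by omega)
    (sum_nonneg fun i _ ↦ hA.eigenvalues_nonneg i) maclaurin

theorem stmt_5 (n : ℕ) (hn : 2 ≤ n) (B : Matrix (Fin n) (Fin n) ℝ)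
    (hB : IsUnit B.det) :
    Real.sqrt ((B.adjugate.transpose * B.adjugate).trace) ≤
      (n : ℝ) ^ (-(((n : ℝ) - 2) / 2)) * Real.sqrt ((B.transpose * B).trace) ^ (n - 1) :=
  stmt_5_general n hn B
end
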